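/- (Lemma 4.3, monotonicity and low-power concavity.) Let P ≥ 0. Define g₃ᴵ : ℝ → ℝ by g₃ᴵ(C) = 1/2 + (1/2)·erf(√C + √(P/2)) and g₃ᴿ : ℝ → ℝ by g₃ᴿ(C) = 1/2 + (1/2)·erf(√C − √(P/2)). Then: (i) g₃ᴵ is monotonically increasing on [0, ∞) (MonotoneOn g₃ᴵ (Set.Ici 0)) and concave on [0, ∞) (ConcaveOn ℝ (Set.Ici 0) g₃ᴵ); (ii) g₃ᴿ is monotonically increasing on [0, ∞) (MonotoneOn g₃ᴿ (Set.Ici 0)); and (iii) if moreover P ≤ 4, then g₃ᴿ is concave on [0, ∞) (ConcaveOn ℝ (Set.Ici 0) g₃ᴿ). -/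

import Mathlib

open MeasureTheory ProbabilityTheory Real Set

noncomputable def erf (x : ℝ) : ℝ :=
  (2 / Real.sqrt Real.pi) * ∫ t in (0:ℝ)..x, Real.exp (-t^2)

/-!
With `u = √C`, the chain rule gives `d/dC erf (√C + b) = exp (-(u + b)²) / (√π u)`, which is
positive, so `C ↦ erf (√C + b)` is monotone. It is concave on `[0, ∞)` iff this derivative is
antitone in `u > 0`; the derivative of `exp (-(u + b)²) / u` is
`-exp (-(u + b)²) (2u(u + b) + 1) / u²`, and `2u² + 2bu + 1 ≥ (√2 u - 1)² ≥ 0` as soon as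
`b ≥ -√2`. For `g₃ᴵ` we have `b = √(P/2) ≥ 0`, and for `g₃ᴿ` we have `b = -√(P/2) ≥ -√2`
exactly when `P ≤ 4`.
-/

theorem hasDerivAt_erf (x : ℝ) : HasDerivAt erf (2 / √π * exp (-x ^ 2)) x := by
  have hcont : Continuous fun t : ℝ => exp (-t ^ 2) := by fun_prop
  exact (intervalIntegral.integral_hasDerivAt_right (hcont.intervalIntegrable _ _)
    (hcont.stronglyMeasurableAtFilter volume _) hcont.continuousAt).const_mul _

theorem differentiable_erf : Differentiable ℝ erf := fun x => (hasDerivAt_erf x).differentiableAt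

theorem monotone_erf : Monotone erf :=
  monotone_of_deriv_nonneg differentiable_erf fun x => by
    rw [(hasDerivAt_erf x).deriv]; positivity

theorem monotone_erf_sqrt_add (b : ℝ) : Monotone fun C => erf (√C + b) :=
  monotone_erf.comp fun _ _ h => add_le_add_left (sqrt_le_sqrt h) b

theorem hasDerivAt_erf_sqrt_add (b : ℝ) {C : ℝ} (hC : 0 < C) :
    HasDerivAt (fun C => erf (√C + b)) (exp (-(√C + b) ^ 2) / (√π * √C)) C := by
  refine ((hasDerivAt_erf _).comp C ((hasDerivAt_sqrt hC.ne').add_const b)).congr_deriv ?_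
  have : √C ≠ 0 := by positivity
  field_simp

theorem two_mul_mul_add_add_one_nonneg {b u : ℝ} (hb : -√2 ≤ b) (hu : 0 ≤ u) :
    0 ≤ 2 * u * (u + b) + 1 := by
  have hsq : (√2 * u - 1) ^ 2 = 2 * u ^ 2 - 2 * √2 * u + 1 := by
    rw [sub_sq, mul_pow, sq_sqrt zero_le_two]; ring
  nlinarith [sq_nonneg (√2 * u - 1), mul_nonneg hu (neg_le_iff_add_nonneg.1 hb)]

theorem antitoneOn_exp_neg_sq_add_div {b : ℝ} (hb : -√2 ≤ b) :
    AntitoneOn (fun u => exp (-(u + b) ^ 2) / u) (Ioi 0) := by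
  have hderiv : ∀ u ∈ Ioi (0:ℝ), HasDerivAt (fun u => exp (-(u + b) ^ 2) / u)
      (-(exp (-(u + b) ^ 2) * (2 * u * (u + b) + 1)) / u ^ 2) u := by
    intro u hu
    have hexp : HasDerivAt (fun u => exp (-(u + b) ^ 2))
        (exp (-(u + b) ^ 2) * -(2 * (u + b))) u := by
      simpa using (((hasDerivAt_id u).add_const b).fun_pow 2).fun_neg.exp
    refine (hexp.div (hasDerivAt_id u) hu.ne').congr_deriv ?_
    simp only [id]
    ring
  refine antitoneOn_of_hasDerivWithinAt_nonpos (convex_Ioi 0)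
    (fun u hu => (hderiv u hu).continuousAt.continuousWithinAt)
    (fun u hu => (hderiv u (interior_subset hu)).hasDerivWithinAt) fun u hu => ?_
  rw [interior_Ioi] at hu
  have hpoly := two_mul_mul_add_add_one_nonneg hb hu.le
  have hexp := exp_pos (-(u + b) ^ 2)
  exact div_nonpos_of_nonpos_of_nonneg (by nlinarith) (sq_nonneg u)

theorem concaveOn_erf_sqrt_add {b : ℝ} (hb : -√2 ≤ b) :
    ConcaveOn ℝ (Ici 0) fun C => erf (√C + b) := by
  refine AntitoneOn.concaveOn_of_deriv (convex_Ici 0)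
    (differentiable_erf.continuous.comp (continuous_sqrt.add continuous_const)).continuousOn
    (fun C hC => ?_) ?_ <;> rw [interior_Ici] at *
  · exact (hasDerivAt_erf_sqrt_add b hC).differentiableAt.differentiableWithinAt
  intro x hx y hy hxy
  rw [(hasDerivAt_erf_sqrt_add b hx).deriv, (hasDerivAt_erf_sqrt_add b hy).deriv,
    div_mul_eq_div_div, div_mul_eq_div_div, div_right_comm, div_right_comm _ √π]
  gcongr ?_ / _
  exact antitoneOn_exp_neg_sq_add_div hb (sqrt_pos.2 hx) (sqrt_pos.2 hy) (sqrt_le_sqrt hxy)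

theorem stmt_18_general (P : ℝ)
    (g₃I g₃R : ℝ → ℝ)
    (hg₃I : ∀ C, g₃I C = 1/2 + (1/2) * erf (Real.sqrt C + Real.sqrt (P/2)))
    (hg₃R : ∀ C, g₃R C = 1/2 + (1/2) * erf (Real.sqrt C - Real.sqrt (P/2))) :
    (MonotoneOn g₃I (Set.Ici 0) ∧ ConcaveOn ℝ (Set.Ici 0) g₃I) ∧
    MonotoneOn g₃R (Set.Ici 0) ∧
    (P ≤ 4 → ConcaveOn ℝ (Set.Ici 0) g₃R) := by
  obtain rfl : g₃I = fun C => 1/2 + (1/2) * erf (√C + √(P/2)) := funext hg₃I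
  obtain rfl : g₃R = fun C => 1/2 + (1/2) * erf (√C + -√(P/2)) :=
    funext fun C => by rw [hg₃R, sub_eq_add_neg]
  have mono (b : ℝ) : MonotoneOn (fun C => 1/2 + (1/2) * erf (√C + b)) (Ici 0) :=
    (((monotone_erf_sqrt_add b).const_mul (by norm_num : (0:ℝ) ≤ 1/2)).const_add _).monotoneOn _
  have affine {f : ℝ → ℝ} (hf : ConcaveOn ℝ (Ici 0) f) :
      ConcaveOn ℝ (Ici 0) fun C => 1/2 + (1/2) * f C := by
    simpa only [Pi.add_def, smul_eq_mul] using
      (concaveOn_const (1/2) (convex_Ici 0)).add (hf.smul (by norm_num : (0:ℝ) ≤ 1/2))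
  refine ⟨⟨mono _, affine (concaveOn_erf_sqrt_add ?_)⟩, mono _,
    fun hP => affine (concaveOn_erf_sqrt_add ?_)⟩
  · linarith [sqrt_nonneg (P/2), sqrt_nonneg 2]
  · exact neg_le_neg (sqrt_le_sqrt (by linarith))

theorem stmt_18 (P : ℝ) (hP : 0 ≤ P)
    (g₃I g₃R : ℝ → ℝ)
    (hg₃I : ∀ C, g₃I C = 1/2 + (1/2) * erf (Real.sqrt C + Real.sqrt (P/2)))
    (hg₃R : ∀ C, g₃R C = 1/2 + (1/2) * erf (Real.sqrt C - Real.sqrt (P/2))) :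
    (MonotoneOn g₃I (Set.Ici 0) ∧ ConcaveOn ℝ (Set.Ici 0) g₃I) ∧
    MonotoneOn g₃R (Set.Ici 0) ∧
    (P ≤ 4 → ConcaveOn ℝ (Set.Ici 0) g₃R) :=
  stmt_18_general P g₃I g₃R hg₃I hg₃R
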